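/- Let λ, τ, ε > 0 and κ, M > 0 be real constants, let μ̂_X, μ̂_U, μ̂_D > 0, and let σ_u, σ_d, γ, α : [0,∞) → [0,∞) be class-K∞ functions (continuous, strictly increasing, vanishing at 0, and tending to ∞ at ∞). For N ∈ ℕ and μ > 0 define ρ(N,μ) = 1 − max{μ/M, 2μ(N+1)/(κτ)} and Θ(N,μ) = (1 − ρ(N,μ))·M + (1 + ρ(N,μ))·κτ/(N+1) + μ. Then there exist real numbers μ_x, μ_u, μ_d, θ_d > 0 and N ∈ ℕ such that: (i) max{σ_u(μ_u), σ_d(θ_d)}/λ + γ(μ_x)/(1 − e^{−λτ}) ≤ α(ε); (ii) μ_x ≤ μ̂_X; (iii) μ_u ≤ μ̂_U; (iv) μ_d ≤ μ̂_D; and (v) Θ(N, μ_d) ≤ θ_d. -/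

import Mathlib

/-- A class-K∞ function: continuous, strictly increasing, vanishing at 0,
nonnegative, and tending to ∞ at ∞ (as a function on [0, ∞)). -/
def ClassKInfty (f : ℝ → ℝ) : Prop :=
  ContinuousOn f (Set.Ici 0) ∧ StrictMonoOn f (Set.Ici 0) ∧ f 0 = 0 ∧
    (∀ x ∈ Set.Ici (0 : ℝ), 0 ≤ f x) ∧ Filter.Tendsto f Filter.atTop Filter.atTop

/-!
Each constraint except the last one holds for all sufficiently small positive values of its
parameter, because the K∞ functions are continuous at 0 and vanish there. The last constraint
couples `μd` with `θd` and `N`: fix `θd` small first, then `N` with `2κτ/(N+1) < θd`; as `μd → 0`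
we have `ρ(N, μd) → 1`, so `Θ(N, μd) → 2κτ/(N+1) < θd`.
-/

open Filter Topology Set

namespace ClassKInfty

variable {f : ℝ → ℝ}

theorem pos (hf : ClassKInfty f) {x : ℝ} (hx : 0 < x) : 0 < f x := by
  simpa only [hf.2.2.1] using hf.2.1 self_mem_Ici hx.le hx

theorem eventually_le (hf : ClassKInfty f) {c : ℝ} (hc : 0 < c) :
    ∀ᶠ x in 𝓝[>] 0, f x ≤ c := by
  have hlim : Tendsto f (𝓝[≥] 0) (𝓝 0) := by
    simpa only [ContinuousWithinAt, hf.2.2.1] using hf.1 0 self_mem_Ici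
  exact ((hlim.mono_left (nhdsWithin_mono 0 Ioi_subset_Ici_self)).eventually_lt_const hc).mono
    fun _ ↦ le_of_lt

end ClassKInfty

theorem exists_pos_le_of_eventually_nhdsGT {p : ℝ → Prop} (hp : ∀ᶠ x in 𝓝[>] 0, p x)
    {b : ℝ} (hb : 0 < b) : ∃ x, 0 < x ∧ x ≤ b ∧ p x := by
  have hle : ∀ᶠ x in 𝓝[>] (0 : ℝ), x ≤ b :=
    (tendsto_nhdsWithin_of_tendsto_nhds tendsto_id).eventually_le_const hb
  obtain ⟨x, ⟨hx0, hxb⟩, hpx⟩ := ((eventually_mem_nhdsWithin.and hle).and hp).exists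
  exact ⟨x, hx0, hxb, hpx⟩

theorem tendsto_one_sub_max_div (M c : ℝ) (N : ℕ) :
    Tendsto (fun μ : ℝ ↦ 1 - max (μ / M) (2 * μ * (N + 1) / c)) (𝓝 0) (𝓝 1) := by
  have : Continuous (fun μ : ℝ ↦ 1 - max (μ / M) (2 * μ * (N + 1) / c)) := by fun_prop
  simpa using this.tendsto 0

theorem tendsto_error_bound_of_tendsto_one {ρ : ℝ → ℝ} (hρ : Tendsto ρ (𝓝 0) (𝓝 1)) (M q : ℝ) :
    Tendsto (fun μ ↦ (1 - ρ μ) * M + (1 + ρ μ) * q + μ) (𝓝 0) (𝓝 (2 * q)) := by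
  have hlim := (((tendsto_const_nhds (x := (1 : ℝ))).sub hρ).mul_const M).add
    (((tendsto_const_nhds (x := (1 : ℝ))).add hρ).mul_const q) |>.add tendsto_id
  rwa [show (1 - 1) * M + (1 + 1) * q + 0 = 2 * q by ring] at hlim

theorem exists_nat_div_succ_lt (c : ℝ) {θ : ℝ} (hθ : 0 < θ) : ∃ N : ℕ, c / (N + 1) < θ := by
  have := (tendsto_one_div_add_atTop_nhds_zero_nat (𝕜 := ℝ)).const_mul c
  rw [mul_zero] at this
  obtain ⟨N, hN⟩ := (this.eventually_lt_const hθ).exists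
  exact ⟨N, by simpa only [mul_one_div] using hN⟩

theorem stmt_11_general (lam τ ε κ M : ℝ) (hlam : 0 < lam) (hτ : 0 < τ) (hε : 0 < ε)
    (μX μU μD : ℝ) (hμX : 0 < μX) (hμU : 0 < μU) (hμD : 0 < μD)
    (σu σd γ α : ℝ → ℝ)
    (hσu : ClassKInfty σu) (hσd : ClassKInfty σd)
    (hγ : ClassKInfty γ) (hα : ClassKInfty α)
    (ρ Θ : ℕ → ℝ → ℝ)
    (hρ : ∀ (N : ℕ) (μ : ℝ), ρ N μ = 1 - max (μ / M) (2 * μ * (N + 1) / (κ * τ)))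
    (hΘ : ∀ (N : ℕ) (μ : ℝ),
      Θ N μ = (1 - ρ N μ) * M + (1 + ρ N μ) * (κ * τ / (N + 1)) + μ) :
    ∃ (μx μu μd θd : ℝ) (N : ℕ),
      0 < μx ∧ 0 < μu ∧ 0 < μd ∧ 0 < θd ∧
      max (σu μu) (σd θd) / lam + γ μx / (1 - Real.exp (-lam * τ)) ≤ α ε ∧
      μx ≤ μX ∧ μu ≤ μU ∧ μd ≤ μD ∧ Θ N μd ≤ θd := by
  have hαε : 0 < α ε := hα.pos hε
  have hdecay : 0 < 1 - Real.exp (-lam * τ) :=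
    sub_pos.2 (Real.exp_lt_one_iff.2 (mul_neg_of_neg_of_pos (neg_neg_of_pos hlam) hτ))
  have hlamα : 0 < lam * (α ε / 2) := by positivity
  obtain ⟨μu, hμu, hμuU, hσuμu⟩ :=
    exists_pos_le_of_eventually_nhdsGT (hσu.eventually_le hlamα) hμU
  obtain ⟨θd, hσdθd, hθd⟩ := ((hσd.eventually_le hlamα).and eventually_mem_nhdsWithin).exists
  obtain ⟨μx, hμx, hμxX, hγμx⟩ :=
    exists_pos_le_of_eventually_nhdsGT (hγ.eventually_le (mul_pos hdecay (half_pos hαε))) hμX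
  obtain ⟨N, hN⟩ := exists_nat_div_succ_lt (κ * τ) (half_pos hθd)
  have hΘN : Tendsto (Θ N) (𝓝 0) (𝓝 (2 * (κ * τ / (N + 1)))) := by
    rw [show Θ N = _ from funext fun μ ↦ by rw [hΘ, hρ]]
    exact tendsto_error_bound_of_tendsto_one (tendsto_one_sub_max_div M (κ * τ) N) M _
  obtain ⟨μd, hμd, hμdD, hΘμd⟩ := exists_pos_le_of_eventually_nhdsGT
    (nhdsWithin_le_nhds (hΘN.eventually_lt_const ((lt_div_iff₀' two_pos).1 hN))) hμD
  refine ⟨μx, μu, μd, θd, N, hμx, hμu, hμd, hθd, ?_, hμxX, hμuU, hμdD, hΘμd.le⟩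
  calc max (σu μu) (σd θd) / lam + γ μx / (1 - Real.exp (-lam * τ))
      ≤ α ε / 2 + α ε / 2 :=
        add_le_add ((div_le_iff₀' hlam).2 (max_le hσuμu hσdθd)) ((div_le_iff₀' hdecay).2 hγμx)
    _ = α ε := add_halves _

/-- Proposition 4.2: existence of quantization parameters satisfying the coupled
inequalities (23)–(27). -/
theorem stmt_11 (lam τ ε κ M : ℝ) (hlam : 0 < lam) (hτ : 0 < τ) (hε : 0 < ε)
    (hκ : 0 < κ) (hM : 0 < M)
    (μX μU μD : ℝ) (hμX : 0 < μX) (hμU : 0 < μU) (hμD : 0 < μD)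
    (σu σd γ α : ℝ → ℝ)
    (hσu : ClassKInfty σu) (hσd : ClassKInfty σd)
    (hγ : ClassKInfty γ) (hα : ClassKInfty α)
    (ρ Θ : ℕ → ℝ → ℝ)
    (hρ : ∀ (N : ℕ) (μ : ℝ), ρ N μ = 1 - max (μ / M) (2 * μ * (N + 1) / (κ * τ)))
    (hΘ : ∀ (N : ℕ) (μ : ℝ),
      Θ N μ = (1 - ρ N μ) * M + (1 + ρ N μ) * (κ * τ / (N + 1)) + μ) :
    ∃ (μx μu μd θd : ℝ) (N : ℕ),
      0 < μx ∧ 0 < μu ∧ 0 < μd ∧ 0 < θd ∧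
      max (σu μu) (σd θd) / lam + γ μx / (1 - Real.exp (-lam * τ)) ≤ α ε ∧
      μx ≤ μX ∧ μu ≤ μU ∧ μd ≤ μD ∧ Θ N μd ≤ θd :=
  stmt_11_general lam τ ε κ M hlam hτ hε μX μU μD hμX hμU hμD σu σd γ α hσu hσd hγ hα ρ Θ hρ hΘ
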